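/- arXiv:1306.6145 — 7 statements merged into one kernel-verified Lean document; each statement's English description precedes it below -/
import Mathlib

section
/- Let {T_k}_{k≥0} be strictly nonexpansive operators on ℝⁿ with F := ⋂_k Fix(T_k) ≠ ∅, and let {x^k} be generated by x^{k+1} = T_{k+1}(x^k). Suppose for every ℓ ≥ 0 there exists k(ℓ) ≥ 0 such that ‖T_{k+1}(x^k) − z‖ ≤ ‖T_ℓ(x^k) − z‖ for all z ∈ F and all k ≥ k(ℓ). Then every accumulation point of {x^k} belongs to F. -/
/-!
Fix `z ∈ F`. Since every `T k` is nonexpansive and fixes `z`, the distances `‖x k - z‖` decrease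
to some limit `d`, and Condition 1 squeezes `‖T ℓ (x k) - z‖` between `‖x (k + 1) - z‖` and
`‖x k - z‖`, so it tends to `d` as well. Passing to an accumulation point `x̄` by continuity gives
`‖T ℓ x̄ - T ℓ z‖ = ‖x̄ - z‖ = d`, and strict nonexpansiveness forces `T ℓ x̄ = x̄`.
-/

open Filter Topology

theorem MapClusterPt.eq_of_tendsto_comp {α X Y : Type*} [TopologicalSpace X] [TopologicalSpace Y]
    [T2Space Y] {l : Filter α} {u : α → X} {f : X → Y} {a : X} {b : Y}
    (ha : MapClusterPt a l u) (hf : ContinuousAt f a) (hfu : Tendsto (f ∘ u) l (𝓝 b)) :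
    f a = b :=
  eq_of_nhds_neBot ((ha.continuousAt_comp hf).clusterPt.mono hfu)

theorem tendsto_of_succ_le_of_le {α : Type*} [TopologicalSpace α] [Preorder α] [OrderTopology α]
    {u v : ℕ → α} {d : α} (hu : Tendsto u atTop (𝓝 d)) (hlow : ∀ᶠ k in atTop, u (k + 1) ≤ v k)
    (hup : ∀ᶠ k in atTop, v k ≤ u k) : Tendsto v atTop (𝓝 d) :=
  tendsto_of_tendsto_of_tendsto_of_le_of_le' (hu.comp (tendsto_add_atTop_nat 1)) hu hlow hup

theorem apply_eq_self_of_norm_sub_eq {E : Type*} [NormedAddCommGroup E] {T : E → E} {y z : E}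
    (hT : ∀ y w, ‖T y - T w‖ = ‖y - w‖ → T y - T w = y - w) (hz : T z = z)
    (h : ‖T y - z‖ = ‖y - z‖) : T y = y := by
  simpa only [hz, sub_left_inj] using hT y z (by rwa [hz])

/-- For a family of strictly nonexpansive operators with nonempty common fixed point
set `F`, a sequence generated by `x^{k+1} = T_{k+1}(x^k)` satisfying the monotonicity
condition (Condition 1) has all its accumulation points in `F`. -/
theorem accumulation_points_in_F (n : ℕ)
    (T : ℕ → EuclideanSpace ℝ (Fin n) → EuclideanSpace ℝ (Fin n))
    (hT1 : ∀ k x y, ‖T k x - T k y‖ ≤ ‖x - y‖)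
    (hT2 : ∀ k x y, ‖T k x - T k y‖ = ‖x - y‖ → T k x - T k y = x - y)
    (F : Set (EuclideanSpace ℝ (Fin n))) (hF : F = {z | ∀ k, T k z = z})
    (hFne : F.Nonempty)
    (x : ℕ → EuclideanSpace ℝ (Fin n))
    (hx : ∀ k, x (k + 1) = T (k + 1) (x k))
    (hcond : ∀ ℓ : ℕ, ∃ kℓ : ℕ, ∀ z ∈ F, ∀ k ≥ kℓ,
      ‖T (k + 1) (x k) - z‖ ≤ ‖T ℓ (x k) - z‖) :
    ∀ xbar : EuclideanSpace ℝ (Fin n), MapClusterPt xbar Filter.atTop x → xbar ∈ F := by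
  intro xbar hclus
  obtain ⟨z, hz⟩ := hFne
  subst hF
  have hTz : ∀ k y, ‖T k y - z‖ ≤ ‖y - z‖ := fun k y => by simpa only [hz k] using hT1 k y z
  have hfejer : Antitone fun k => ‖x k - z‖ :=
    antitone_nat_of_succ_le fun k => hx k ▸ hTz (k + 1) (x k)
  obtain ⟨d, hd⟩ : ∃ d, Tendsto (fun k => ‖x k - z‖) atTop (𝓝 d) :=
    ⟨_, tendsto_atTop_ciInf hfejer ⟨0, Set.forall_mem_range.2 fun _ => norm_nonneg _⟩⟩
  have hxbar : ‖xbar - z‖ = d := hclus.eq_of_tendsto_comp (f := (‖· - z‖)) (by fun_prop) hd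
  intro ℓ
  obtain ⟨kℓ, hkℓ⟩ := hcond ℓ
  have hTℓx : Tendsto (fun k => ‖T ℓ (x k) - z‖) atTop (𝓝 d) :=
    tendsto_of_succ_le_of_le hd (eventually_atTop.2 ⟨kℓ, fun k hk => hx k ▸ hkℓ z hz k hk⟩)
      (Eventually.of_forall fun k => hTz ℓ (x k))
  have hTℓ : Continuous (T ℓ) :=
    (LipschitzWith.mk_one fun y w => by simpa only [dist_eq_norm] using hT1 ℓ y w).continuous
  have hTxbar : ‖T ℓ xbar - z‖ = d :=
    hclus.eq_of_tendsto_comp (f := (‖T ℓ · - z‖)) (by fun_prop) hTℓx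
  exact apply_eq_self_of_norm_sub_eq (hT2 ℓ) (hz ℓ) (hTxbar.trans hxbar.symm)
end

section
/- Let {T_k}_{k≥0} be strictly nonexpansive operators on ℝⁿ with F := ⋂_k Fix(T_k) ≠ ∅, and let {x^k} be generated by x^{k+1} = T_{k+1}(x^k). If for every ℓ ≥ 0 there exists k(ℓ) ≥ 0 such that ‖T_{k+1}(x^k) − z‖ ≤ ‖T_ℓ(x^k) − z‖ for all z ∈ F and all k ≥ k(ℓ), then the sequence {x^k} converges to an element of F. -/
/-!
The iterates are Fejér monotone with respect to `F`, so they are bounded and have a convergent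
subsequence `x^{φ j} → x̄`. Fix `z ∈ F` and let `d` be the limit of `‖x^k - z‖`. The hypothesis
`‖x^{k+1} - z‖ ≤ ‖T_ℓ(x^k) - z‖` (for large `k`) and nonexpansiveness squeeze `‖T_ℓ(x^k) - z‖` between `‖x^{k+1} - z‖` and `‖x^k - z‖`, so it also tends
to `d`; passing to the subsequence gives `‖T_ℓ x̄ - z‖ = d = ‖x̄ - z‖`, and strict nonexpansiveness
forces `T_ℓ x̄ = x̄`. Thus `x̄ ∈ F`, and Fejér monotonicity with respect to `x̄` upgrades the
convergence of the subsequence to convergence of the whole sequence.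
-/

open Filter Topology

def FejerMonotone {X : Type*} [MetricSpace X] (x : ℕ → X) (F : Set X) : Prop :=
  ∀ z ∈ F, ∀ k, dist (x (k + 1)) z ≤ dist (x k) z

namespace FejerMonotone

variable {X : Type*} [MetricSpace X] {x : ℕ → X} {F : Set X}

theorem antitone_dist (hx : FejerMonotone x F) {z : X} (hz : z ∈ F) :
    Antitone fun k => dist (x k) z :=
  antitone_nat_of_succ_le (hx z hz)

theorem tendsto_dist_ciInf (hx : FejerMonotone x F) {z : X} (hz : z ∈ F) :
    Tendsto (fun k => dist (x k) z) atTop (𝓝 (⨅ k, dist (x k) z)) :=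
  tendsto_atTop_ciInf (hx.antitone_dist hz) ⟨0, by rintro _ ⟨k, rfl⟩; exact dist_nonneg⟩

theorem tendsto_of_tendsto_comp (hx : FejerMonotone x F) {xbar : X} (hxbar : xbar ∈ F)
    {φ : ℕ → ℕ} (hφ : StrictMono φ) (hsub : Tendsto (x ∘ φ) atTop (𝓝 xbar)) :
    Tendsto x atTop (𝓝 xbar) := by
  have hinf : (⨅ k, dist (x k) xbar) = 0 :=
    tendsto_nhds_unique ((hx.tendsto_dist_ciInf hxbar).comp hφ.tendsto_atTop)
      (tendsto_iff_dist_tendsto_zero.mp hsub)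
  exact tendsto_iff_dist_tendsto_zero.mpr (hinf ▸ hx.tendsto_dist_ciInf hxbar)

theorem exists_subseq_tendsto [ProperSpace X] (hx : FejerMonotone x F) (hF : F.Nonempty) :
    ∃ xbar, ∃ φ : ℕ → ℕ, StrictMono φ ∧ Tendsto (x ∘ φ) atTop (𝓝 xbar) := by
  obtain ⟨z, hz⟩ := hF
  have hball : ∀ k, x k ∈ Metric.closedBall z (dist (x 0) z) := fun k =>
    hx.antitone_dist hz (Nat.zero_le k)
  obtain ⟨xbar, -, φ, hφ, hsub⟩ := tendsto_subseq_of_bounded Metric.isBounded_closedBall hball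
  exact ⟨xbar, φ, hφ, hsub⟩

end FejerMonotone

section StrictlyNonexpansive

variable {E : Type*} [NormedAddCommGroup E]

def StrictlyNonexpansive (S : E → E) : Prop :=
  (∀ x y, ‖S x - S y‖ ≤ ‖x - y‖) ∧ ∀ x y, ‖S x - S y‖ = ‖x - y‖ → S x - S y = x - y

theorem StrictlyNonexpansive.continuous {S : E → E} (hS : StrictlyNonexpansive S) :
    Continuous S :=
  (LipschitzWith.of_dist_le_mul (K := 1) fun a b => by
    simpa only [dist_eq_norm, NNReal.coe_one, one_mul] using hS.1 a b).continuous

theorem StrictlyNonexpansive.apply_eq_self_of_norm_sub_eq {S : E → E}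
    (hS : StrictlyNonexpansive S) {y z : E} (hz : S z = z) (h : ‖S y - z‖ = ‖y - z‖) :
    S y = y := by
  have := hS.2 y z (by rwa [hz])
  rwa [hz, sub_left_inj] at this

theorem fejerMonotone_of_nonexpansive {T : ℕ → E → E}
    (hT : ∀ k x y, ‖T k x - T k y‖ ≤ ‖x - y‖) {x : ℕ → E}
    (hx : ∀ k, x (k + 1) = T (k + 1) (x k)) : FejerMonotone x {z | ∀ k, T k z = z} := by
  intro z hz k
  simpa only [dist_eq_norm, hx k, hz (k + 1)] using hT (k + 1) (x k) z

theorem StrictlyNonexpansive.apply_eq_self_of_tendsto_comp {S : E → E}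
    (hS : StrictlyNonexpansive S) {x : ℕ → E} {z xbar : E} {d : ℝ} {φ : ℕ → ℕ} (hz : S z = z)
    (hd : Tendsto (fun k => ‖x k - z‖) atTop (𝓝 d))
    (hstep : ∀ᶠ k in atTop, ‖x (k + 1) - z‖ ≤ ‖S (x k) - z‖)
    (hφ : StrictMono φ) (hsub : Tendsto (x ∘ φ) atTop (𝓝 xbar)) : S xbar = xbar := by
  have hSd : Tendsto (fun k => ‖S (x k) - z‖) atTop (𝓝 d) :=
    tendsto_of_tendsto_of_tendsto_of_le_of_le' (hd.comp (tendsto_add_atTop_nat 1)) hd hstep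
      (Eventually.of_forall fun k => by simpa only [hz] using hS.1 (x k) z)
  have hxbar : ‖xbar - z‖ = d :=
    tendsto_nhds_unique (hsub.sub_const z).norm (hd.comp hφ.tendsto_atTop)
  have hSxbar : ‖S xbar - z‖ = d :=
    tendsto_nhds_unique (((hS.continuous.tendsto xbar).comp hsub).sub_const z).norm
      (hSd.comp hφ.tendsto_atTop)
  exact hS.apply_eq_self_of_norm_sub_eq hz (hSxbar.trans hxbar.symm)

end StrictlyNonexpansive

/-- Main convergence theorem: for a family of strictly nonexpansive operators with
nonempty common fixed point set `F` and the monotonicity condition (Condition 1), any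
sequence generated by `x^{k+1} = T_{k+1}(x^k)` converges to an element of `F`. -/
theorem convergence_of_SNE_family (n : ℕ)
    (T : ℕ → EuclideanSpace ℝ (Fin n) → EuclideanSpace ℝ (Fin n))
    (hT1 : ∀ k x y, ‖T k x - T k y‖ ≤ ‖x - y‖)
    (hT2 : ∀ k x y, ‖T k x - T k y‖ = ‖x - y‖ → T k x - T k y = x - y)
    (F : Set (EuclideanSpace ℝ (Fin n))) (hF : F = {z | ∀ k, T k z = z})
    (hFne : F.Nonempty)
    (x : ℕ → EuclideanSpace ℝ (Fin n))
    (hx : ∀ k, x (k + 1) = T (k + 1) (x k))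
    (hcond : ∀ ℓ : ℕ, ∃ kℓ : ℕ, ∀ z ∈ F, ∀ k ≥ kℓ,
      ‖T (k + 1) (x k) - z‖ ≤ ‖T ℓ (x k) - z‖) :
    ∃ xbar ∈ F, Filter.Tendsto x Filter.atTop (nhds xbar) := by
  have hfejer : FejerMonotone x F := hF ▸ fejerMonotone_of_nonexpansive hT1 hx
  obtain ⟨xbar, φ, hφ, hsub⟩ := hfejer.exists_subseq_tendsto hFne
  obtain ⟨z, hz⟩ := hFne
  have hzfix : ∀ k, T k z = z := by rw [hF] at hz; exact hz
  have hxbar : xbar ∈ F := by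
    rw [hF]
    intro ℓ
    obtain ⟨kℓ, hkℓ⟩ := hcond ℓ
    refine StrictlyNonexpansive.apply_eq_self_of_tendsto_comp ⟨hT1 ℓ, hT2 ℓ⟩ (hzfix ℓ)
      (by simpa only [dist_eq_norm] using hfejer.tendsto_dist_ciInf hz) ?_ hφ hsub
    filter_upwards [eventually_ge_atTop kℓ] with k hk
    rw [hx k]
    exact hkℓ z hz k hk
  exact ⟨xbar, hxbar, hfejer.tendsto_of_tendsto_comp hxbar hφ hsub⟩
end

section
/- If S is an n×n real matrix that is symmetric, stochastic (nonnegative entries with each row summing to 1), and has positive diagonal entries, then ‖Sx‖ ≤ ‖x‖ for all x ∈ ℝⁿ, and ‖Sx‖ = ‖x‖ implies Sx = x. -/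
/-!
For a matrix `S` with unit row and column sums and `y = S x`, expanding squares gives the
energy identity `‖x‖² - ‖y‖² = ∑ᵢ ∑ⱼ Sᵢⱼ (xⱼ - yᵢ)²`. When `S` has nonnegative entries the right
side is a sum of nonnegative terms, so `‖Sx‖ ≤ ‖x‖`; if equality holds, every term vanishes, and
the diagonal term `Sᵢᵢ (xᵢ - yᵢ)²` with `Sᵢᵢ > 0` forces `yᵢ = xᵢ`. A symmetric row-stochastic
matrix is doubly stochastic, so this applies.
-/

open Finset

namespace Matrix

variable {n R : Type*} [Fintype n]

theorem sum_sum_mul_sq_sub_mulVec [CommRing R] {S : Matrix n n R}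
    (hrow : ∀ i, ∑ j, S i j = 1) (hcol : ∀ j, ∑ i, S i j = 1) (x : n → R) :
    ∑ i, ∑ j, S i j * (x j - (S *ᵥ x) i) ^ 2 = ∑ i, x i ^ 2 - ∑ i, (S *ᵥ x) i ^ 2 := by
  have hmulVec : ∀ i, (S *ᵥ x) i = ∑ j, S i j * x j := fun i => rfl
  have hrow_sum : ∀ i, ∑ j, S i j * (x j - (S *ᵥ x) i) ^ 2
      = ∑ j, S i j * x j ^ 2 - (S *ᵥ x) i ^ 2 := by
    intro i
    calc ∑ j, S i j * (x j - (S *ᵥ x) i) ^ 2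
        = ∑ j, S i j * x j ^ 2 - 2 * (S *ᵥ x) i * ∑ j, S i j * x j
            + (S *ᵥ x) i ^ 2 * ∑ j, S i j := by
          simp only [mul_sum, ← sum_sub_distrib, ← sum_add_distrib]
          exact sum_congr rfl fun j _ => by ring
      _ = ∑ j, S i j * x j ^ 2 - (S *ᵥ x) i ^ 2 := by
          rw [← hmulVec, hrow]; ring
  have hcol_sum : ∑ i, ∑ j, S i j * x j ^ 2 = ∑ j, x j ^ 2 := by
    rw [sum_comm]
    exact sum_congr rfl fun j _ => by rw [← sum_mul, hcol, one_mul]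
  rw [sum_congr rfl fun i _ => hrow_sum i, sum_sub_distrib, hcol_sum]

theorem IsSymm.mem_doublyStochastic [DecidableEq n] [Semiring R] [PartialOrder R]
    [IsOrderedRing R] {S : Matrix n n R} (hsym : S.IsSymm) (hnn : ∀ i j, 0 ≤ S i j)
    (hrow : ∀ i, ∑ j, S i j = 1) : S ∈ doublyStochastic R n :=
  mem_doublyStochastic_iff_sum.mpr
    ⟨hnn, hrow, fun j => (sum_congr rfl fun i _ => hsym.apply j i).trans (hrow j)⟩

section DoublyStochastic

variable [DecidableEq n] [CommRing R] [LinearOrder R] [IsStrictOrderedRing R]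
  {S : Matrix n n R}

theorem sum_mulVec_sq_le_of_mem_doublyStochastic (hS : S ∈ doublyStochastic R n)
    (x : n → R) : ∑ i, (S *ᵥ x) i ^ 2 ≤ ∑ i, x i ^ 2 := by
  have hgap := sum_sum_mul_sq_sub_mulVec (sum_row_of_mem_doublyStochastic hS)
    (sum_col_of_mem_doublyStochastic hS) x
  exact sub_nonneg.mp <| hgap ▸ sum_nonneg fun i _ => sum_nonneg fun j _ =>
    mul_nonneg (nonneg_of_mem_doublyStochastic hS) (sq_nonneg _)

theorem mulVec_eq_self_of_sum_mulVec_sq_eq (hS : S ∈ doublyStochastic R n)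
    (hdiag : ∀ i, 0 < S i i) {x : n → R} (h : ∑ i, (S *ᵥ x) i ^ 2 = ∑ i, x i ^ 2) :
    S *ᵥ x = x := by
  have hgap := sum_sum_mul_sq_sub_mulVec (sum_row_of_mem_doublyStochastic hS)
    (sum_col_of_mem_doublyStochastic hS) x
  rw [h, sub_self] at hgap
  have hterm_nonneg : ∀ i j, 0 ≤ S i j * (x j - (S *ᵥ x) i) ^ 2 := fun i j =>
    mul_nonneg (nonneg_of_mem_doublyStochastic hS) (sq_nonneg _)
  funext i
  have hdiag_term : S i i * (x i - (S *ᵥ x) i) ^ 2 = 0 :=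
    (sum_eq_zero_iff_of_nonneg fun j _ => hterm_nonneg i j).mp
      ((sum_eq_zero_iff_of_nonneg fun i _ => sum_nonneg fun j _ => hterm_nonneg i j).mp
        hgap i (mem_univ i)) i (mem_univ i)
  have hsq := (mul_eq_zero.mp hdiag_term).resolve_left (hdiag i).ne'
  exact (sub_eq_zero.mp (pow_eq_zero_iff two_ne_zero |>.mp hsq)).symm

end DoublyStochastic

end Matrix

/-- A symmetric, stochastic matrix `S` with positive diagonal entries satisfies
`‖Sx‖ ≤ ‖x‖` for all `x ∈ ℝⁿ`, and `‖Sx‖ = ‖x‖` implies `Sx = x`. -/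
theorem stochastic_symmetric_posdiag_nonexpansive (n : ℕ)
    (S : Matrix (Fin n) (Fin n) ℝ)
    (hsym : S.IsSymm)
    (hnn : ∀ i j, 0 ≤ S i j)
    (hrow : ∀ i, ∑ j, S i j = 1)
    (hdiag : ∀ i, 0 < S i i) :
    (∀ x : EuclideanSpace ℝ (Fin n), ‖Matrix.toEuclideanLin S x‖ ≤ ‖x‖) ∧
    (∀ x : EuclideanSpace ℝ (Fin n),
      ‖Matrix.toEuclideanLin S x‖ = ‖x‖ → Matrix.toEuclideanLin S x = x) := by
  have hS := hsym.mem_doublyStochastic hnn hrow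
  have hnorm_sq : ∀ x : EuclideanSpace ℝ (Fin n),
      ‖Matrix.toEuclideanLin S x‖ ^ 2 = ∑ i, S.mulVec x.ofLp i ^ 2 :=
    fun x => EuclideanSpace.real_norm_sq_eq _
  refine ⟨fun x => ?_, fun x hx => ?_⟩
  · rw [← sq_le_sq₀ (norm_nonneg _) (norm_nonneg _), hnorm_sq, EuclideanSpace.real_norm_sq_eq]
    exact Matrix.sum_mulVec_sq_le_of_mem_doublyStochastic hS x.ofLp
  · have hsq := congrArg (· ^ 2) hx
    simp only [hnorm_sq, EuclideanSpace.real_norm_sq_eq] at hsq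
    have hfix := Matrix.mulVec_eq_self_of_sum_mulVec_sq_eq hS hdiag hsq
    ext i
    exact congrFun hfix i
end

section
/- A symmetric, stochastic n×n real matrix S with positive diagonal entries defines a strictly nonexpansive linear operator: for all x, y ∈ ℝⁿ, ‖Sx − Sy‖ ≤ ‖x − y‖, and ‖Sx − Sy‖ = ‖x − y‖ implies Sx − Sy = x − y. -/
/-!
Row `i` of `S` is a probability vector, so `(S z)ᵢ` is a weighted mean of the entries of `z`,
and `∑ⱼ Sᵢⱼ zⱼ² - (S z)ᵢ²` is the corresponding variance, which is nonnegative.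
Summing over `i` and using that the columns of `S` also sum to one gives
`‖S z‖² + ∑ᵢ varᵢ = ‖z‖²`. Equality of norms forces every variance to vanish, and since
`Sᵢᵢ > 0` the variance of row `i` controls `(zᵢ - (S z)ᵢ)²`, hence `S z = z`.
-/

open Finset

theorem sum_mul_sub_weightedMean_sq {R ι : Type*} [CommRing R] [Fintype ι] (w z : ι → R)
    (hw : ∑ j, w j = 1) :
    ∑ j, w j * (z j - ∑ k, w k * z k) ^ 2 = ∑ j, w j * z j ^ 2 - (∑ j, w j * z j) ^ 2 := by
  set m := ∑ k, w k * z k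
  have expand : ∀ j, w j * (z j - m) ^ 2 = w j * z j ^ 2 - 2 * m * (w j * z j) + m ^ 2 * w j :=
    fun j => by ring
  simp only [expand, sum_add_distrib, sum_sub_distrib, ← mul_sum, hw]
  ring

namespace Matrix

variable {ι : Type*} [Fintype ι] {S : Matrix ι ι ℝ}

def rowVariance (S : Matrix ι ι ℝ) (z : ι → ℝ) (i : ι) : ℝ :=
  ∑ j, S i j * (z j - (S *ᵥ z) i) ^ 2

theorem rowVariance_eq (hrow : ∀ i, ∑ j, S i j = 1) (z : ι → ℝ) (i : ι) :
    rowVariance S z i = ∑ j, S i j * z j ^ 2 - (S *ᵥ z) i ^ 2 :=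
  sum_mul_sub_weightedMean_sq (S i) z (hrow i)

theorem rowVariance_nonneg {i : ι} (hnn : ∀ j, 0 ≤ S i j) (z : ι → ℝ) :
    0 ≤ rowVariance S z i :=
  sum_nonneg fun j _ => mul_nonneg (hnn j) (sq_nonneg _)

theorem mulVec_apply_eq_of_rowVariance_eq_zero {z : ι → ℝ} {i : ι}
    (hnn : ∀ j, 0 ≤ S i j) (hdiag : 0 < S i i) (h : rowVariance S z i = 0) : (S *ᵥ z) i = z i := by
  have hterm : S i i * (z i - (S *ᵥ z) i) ^ 2 = 0 :=
    (sum_eq_zero_iff_of_nonneg fun j _ => mul_nonneg (hnn j) (sq_nonneg _)).mp h i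
      (mem_univ i)
  rw [mul_eq_zero, pow_eq_zero_iff two_ne_zero, sub_eq_zero] at hterm
  exact (hterm.resolve_left hdiag.ne').symm

theorem sum_sq_mulVec_add_sum_rowVariance (hrow : ∀ i, ∑ j, S i j = 1)
    (hcol : ∀ j, ∑ i, S i j = 1) (z : ι → ℝ) :
    ∑ i, (S *ᵥ z) i ^ 2 + ∑ i, rowVariance S z i = ∑ j, z j ^ 2 := by
  have hmass : ∑ i, ∑ j, S i j * z j ^ 2 = ∑ j, z j ^ 2 := by
    rw [sum_comm]
    exact sum_congr rfl fun j _ => by rw [← sum_mul, hcol j, one_mul]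
  simp only [rowVariance_eq hrow, sum_sub_distrib, hmass]
  ring

theorem norm_sq_toEuclideanLin_add_sum_rowVariance [DecidableEq ι]
    (hrow : ∀ i, ∑ j, S i j = 1) (hcol : ∀ j, ∑ i, S i j = 1) (z : EuclideanSpace ℝ ι) :
    ‖toEuclideanLin S z‖ ^ 2 + ∑ i, rowVariance S z.ofLp i = ‖z‖ ^ 2 := by
  simpa only [EuclideanSpace.real_norm_sq_eq, toLpLin_apply]
    using sum_sq_mulVec_add_sum_rowVariance hrow hcol z.ofLp

end Matrix

open Matrix in
/-- A symmetric, stochastic matrix `S` with positive diagonal entries defines a strictly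
nonexpansive linear operator: `‖Sx − Sy‖ ≤ ‖x − y‖` for all `x, y`, and
`‖Sx − Sy‖ = ‖x − y‖` implies `Sx − Sy = x − y`. -/
theorem stochastic_symmetric_posdiag_SNE (n : ℕ)
    (S : Matrix (Fin n) (Fin n) ℝ)
    (hsym : S.IsSymm)
    (hnn : ∀ i j, 0 ≤ S i j)
    (hrow : ∀ i, ∑ j, S i j = 1)
    (hdiag : ∀ i, 0 < S i i) :
    (∀ x y : EuclideanSpace ℝ (Fin n),
      ‖Matrix.toEuclideanLin S x - Matrix.toEuclideanLin S y‖ ≤ ‖x - y‖) ∧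
    (∀ x y : EuclideanSpace ℝ (Fin n),
      ‖Matrix.toEuclideanLin S x - Matrix.toEuclideanLin S y‖ = ‖x - y‖ →
        Matrix.toEuclideanLin S x - Matrix.toEuclideanLin S y = x - y) := by
  have hcol : ∀ j, ∑ i, S i j = 1 := fun j => by
    rw [← hrow j]
    exact sum_congr rfl fun i _ => hsym.apply j i
  have hnorm := norm_sq_toEuclideanLin_add_sum_rowVariance hrow hcol
  have hvar (z : EuclideanSpace ℝ (Fin n)) : 0 ≤ ∑ i, rowVariance S z.ofLp i :=
    sum_nonneg fun i _ => rowVariance_nonneg (hnn i) _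
  simp only [← map_sub]
  refine ⟨fun x y => ?_, fun x y heq => ?_⟩
  · exact (pow_le_pow_iff_left₀ (norm_nonneg _) (norm_nonneg _) two_ne_zero).mp
      (by linarith [hnorm (x - y), hvar (x - y)])
  · have hzero : ∑ i, rowVariance S (x - y).ofLp i = 0 := by
      have := hnorm (x - y)
      rw [heq] at this
      linarith
    rw [sum_eq_zero_iff_of_nonneg fun i _ => rowVariance_nonneg (hnn i) _] at hzero
    ext i
    simpa only [toLpLin_apply] using
      mulVec_apply_eq_of_rowVariance_eq_zero (hnn i) (hdiag i) (hzero i (mem_univ i))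
end

section
/- Let A be an m×n real matrix, and let T (n×n) and R (n×m) satisfy T + RA = I, range(R) ⊆ range(Aᵀ), and ‖T P_{range(Aᵀ)}‖ < 1 (operator norm, where P_V is orthogonal projection onto V). Then: (i) Tx = x for x ∈ null(A); (ii) T maps range(Aᵀ) into range(Aᵀ); (iii) ‖Tx‖ = ‖x‖ if and only if x ∈ null(A); (iv) ‖T‖ ≤ 1. -/
open Matrix
/-- The continuous linear map on Euclidean spaces induced by a matrix. -/
noncomputable def mulE {m n : ℕ} (A : Matrix (Fin m) (Fin n) ℝ) :
    EuclideanSpace ℝ (Fin n) →L[ℝ] EuclideanSpace ℝ (Fin m) :=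
  LinearMap.toContinuousLinearMap (Matrix.toEuclideanLin A)

/-- The orthogonal projection of the ambient space onto a subspace, as a map of the
ambient space. -/
noncomputable def projCLM {n : ℕ} (V : Submodule ℝ (EuclideanSpace ℝ (Fin n))) :
    EuclideanSpace ℝ (Fin n) →L[ℝ] EuclideanSpace ℝ (Fin n) :=
  V.subtypeL.comp (V.orthogonalProjectionOnto)

/-!
Write `x = P x + P⊥ x` for the orthogonal projection `P` onto `V = range Aᵀ`, whose orthogonal
complement is `null A`. Since `T = I - RA` with `range R ⊆ V`, `T` is the identity on `null A` and
maps `V` into itself, so by Pythagoras `‖T x‖² = ‖T (P x)‖² + ‖P⊥ x‖²` while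
`‖x‖² = ‖P x‖² + ‖P⊥ x‖²`. As `T` is a strict contraction on `V`, `‖T x‖ ≤ ‖x‖`, with equality
exactly when `P x = 0`.
-/

namespace ContinuousLinearMap

variable {𝕜 E : Type*} [RCLike 𝕜] [NormedAddCommGroup E] [InnerProductSpace 𝕜 E]
  {K : Submodule 𝕜 E} [K.HasOrthogonalProjection] {T : E →L[𝕜] E}

theorem norm_apply_starProjection_le (T : E →L[𝕜] E) (x : E) :
    ‖T (K.starProjection x)‖ ≤ ‖T ∘L K.starProjection‖ * ‖K.starProjection x‖ := by
  simpa [K.starProjection_eq_self_iff.mpr (K.starProjection_apply_mem x)] using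
    (T ∘L K.starProjection).le_opNorm (K.starProjection x)

theorem norm_sq_apply_eq_of_invariant (hfix : ∀ x ∈ Kᗮ, T x = x) (hmaps : ∀ x ∈ K, T x ∈ K)
    (x : E) :
    ‖T x‖ ^ 2 = ‖T (K.starProjection x)‖ ^ 2 + ‖Kᗮ.starProjection x‖ ^ 2 := by
  have hsplit : T x = T (K.starProjection x) + Kᗮ.starProjection x := by
    conv_lhs => rw [← K.starProjection_add_starProjection_orthogonal x]
    rw [map_add, hfix _ (Kᗮ.starProjection_apply_mem x)]
  have horth : inner 𝕜 (T (K.starProjection x)) (Kᗮ.starProjection x) = 0 :=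
    K.inner_right_of_mem_orthogonal (hmaps _ (K.starProjection_apply_mem x))
      (Kᗮ.starProjection_apply_mem x)
  simpa only [hsplit, sq] using norm_add_sq_eq_norm_sq_add_norm_sq_of_inner_eq_zero _ _ horth

theorem norm_apply_le_of_invariant (hfix : ∀ x ∈ Kᗮ, T x = x) (hmaps : ∀ x ∈ K, T x ∈ K)
    (hT : ‖T ∘L K.starProjection‖ ≤ 1) (x : E) : ‖T x‖ ≤ ‖x‖ := by
  have hK : ‖T (K.starProjection x)‖ ≤ ‖K.starProjection x‖ :=
    (T.norm_apply_starProjection_le x).trans (mul_le_of_le_one_left (norm_nonneg _) hT)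
  rw [← sq_le_sq₀ (norm_nonneg _) (norm_nonneg _), norm_sq_apply_eq_of_invariant hfix hmaps,
    K.norm_sq_eq_add_norm_sq_starProjection x]
  gcongr

theorem opNorm_le_one_of_invariant (hfix : ∀ x ∈ Kᗮ, T x = x) (hmaps : ∀ x ∈ K, T x ∈ K)
    (hT : ‖T ∘L K.starProjection‖ ≤ 1) : ‖T‖ ≤ 1 :=
  T.opNorm_le_bound zero_le_one fun x => by
    simpa using norm_apply_le_of_invariant hfix hmaps hT x

theorem norm_apply_eq_iff_mem_orthogonal (hfix : ∀ x ∈ Kᗮ, T x = x)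
    (hmaps : ∀ x ∈ K, T x ∈ K) (hT : ‖T ∘L K.starProjection‖ < 1) (x : E) :
    ‖T x‖ = ‖x‖ ↔ x ∈ Kᗮ := by
  refine ⟨fun hnorm => ?_, fun hx => by rw [hfix x hx]⟩
  have hK : ‖T (K.starProjection x)‖ = ‖K.starProjection x‖ := by
    have := norm_sq_apply_eq_of_invariant hfix hmaps x
    rw [hnorm, K.norm_sq_eq_add_norm_sq_starProjection x, add_left_inj] at this
    exact (sq_eq_sq₀ (norm_nonneg _) (norm_nonneg _)).mp this.symm
  -- `‖P x‖ ≤ ‖T ∘ P‖ ‖P x‖` with `‖T ∘ P‖ < 1` forces `P x = 0`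
  have hPx : K.starProjection x = 0 := by
    have := hK ▸ T.norm_apply_starProjection_le (K := K) x
    exact norm_eq_zero.mp (by nlinarith [norm_nonneg (K.starProjection x)])
  exact K.orthogonalProjectionOnto_eq_zero_iff.mp (Subtype.ext hPx)

end ContinuousLinearMap

theorem Matrix.ker_toEuclideanLin_eq_orthogonal_range_transpose {m n : Type*} [Fintype m]
    [Fintype n] [DecidableEq m] [DecidableEq n] (A : Matrix m n ℝ) :
    LinearMap.ker (toEuclideanLin A) = (LinearMap.range (toEuclideanLin Aᵀ))ᗮ := by
  rw [LinearMap.orthogonal_range, ← toEuclideanLin_conjTranspose_eq_adjoint,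
    conjTranspose_eq_transpose_of_trivial, transpose_transpose]

theorem mulE_apply_eq_sub_of_add_mul_eq_one {m n : ℕ} {A : Matrix (Fin m) (Fin n) ℝ}
    {T : Matrix (Fin n) (Fin n) ℝ} {R : Matrix (Fin n) (Fin m) ℝ} (h : T + R * A = 1)
    (x : EuclideanSpace ℝ (Fin n)) : mulE T x = x - mulE R (mulE A x) := by
  have := congrArg (fun M => toEuclideanLin M x) h
  simpa [mulE, toLpLin_apply, add_mulVec, ← mulVec_mulVec, eq_sub_iff_add_eq] using this

/-- If `T + RA = I`, `range R ⊆ range Aᵀ` and `‖T P_{range Aᵀ}‖ < 1`, then: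
(i) `Tx = x` for `x ∈ null A`; (ii) `T` maps `range Aᵀ` into itself;
(iii) `‖Tx‖ = ‖x‖` iff `x ∈ null A`; (iv) `‖T‖ ≤ 1`. -/
theorem properties_of_T (m n : ℕ)
    (A : Matrix (Fin m) (Fin n) ℝ)
    (T : Matrix (Fin n) (Fin n) ℝ)
    (R : Matrix (Fin n) (Fin m) ℝ)
    (h1 : T + R * A = 1)
    (h2 : ∀ y : EuclideanSpace ℝ (Fin m),
      mulE R y ∈ LinearMap.range (Matrix.toEuclideanLin Aᵀ))
    (h3 : ‖(mulE T).comp (projCLM (LinearMap.range (Matrix.toEuclideanLin Aᵀ)))‖ < 1) :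
    (∀ x ∈ LinearMap.ker (Matrix.toEuclideanLin A), mulE T x = x) ∧
    (∀ x ∈ LinearMap.range (Matrix.toEuclideanLin Aᵀ),
      mulE T x ∈ LinearMap.range (Matrix.toEuclideanLin Aᵀ)) ∧
    (∀ x : EuclideanSpace ℝ (Fin n),
      ‖mulE T x‖ = ‖x‖ ↔ x ∈ LinearMap.ker (Matrix.toEuclideanLin A)) ∧
    ‖mulE T‖ ≤ 1 := by
  set V := LinearMap.range (toEuclideanLin Aᵀ)
  have hker : LinearMap.ker (toEuclideanLin A) = Vᗮ :=
    A.ker_toEuclideanLin_eq_orthogonal_range_transpose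
  have hT_apply := mulE_apply_eq_sub_of_add_mul_eq_one h1
  have hfix : ∀ x ∈ Vᗮ, mulE T x = x := fun x hx => by
    rw [hT_apply, show mulE A x = 0 from LinearMap.mem_ker.mp (hker ▸ hx), map_zero, sub_zero]
  have hmaps : ∀ x ∈ V, mulE T x ∈ V := fun x hx => hT_apply x ▸ V.sub_mem hx (h2 _)
  have hcontr : ‖mulE T ∘L V.starProjection‖ < 1 := h3
  rw [hker]
  exact ⟨hfix, hmaps, (mulE T).norm_apply_eq_iff_mem_orthogonal hfix hmaps hcontr,
    (mulE T).opNorm_le_one_of_invariant hfix hmaps hcontr.le⟩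
end

section
/- Let A ∈ ℝ^{m×n}, b ∈ ℝᵐ, and T, R satisfy T + RA = I, range(R) ⊆ range(Aᵀ), and ‖T̃‖ < 1 with T̃ := T P_{range(Aᵀ)}. Define Q(x) = Tx + Rb and Δ := (I − T̃)⁻¹ R P_{null(Aᵀ)}(b). Then Fix(Q) = {x + Δ : x ∈ LSS(A;b)}, where LSS(A;b) is the set of least squares solutions of Ax = b. -/
/-! Since `T + RA = I`, `y` is a fixed point of `Q` iff `R (A y - b) = 0`. Split
`b = P_{range A} b + P_{null Aᵀ} b`. As `range R ⊆ range Aᵀ`, the vector `Δ` lies in `range Aᵀ`,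
where `T̃` agrees with `T`, so `R A Δ = R P_{null Aᵀ} b`. Hence `y` is a fixed point iff
`R (A (y - Δ) - P_{range A} b) = 0`. Now `R` is injective on `range A`: if `R A v = 0` then
`T v = v`, and since `T` fixes `null A = (range Aᵀ)ᗮ` pointwise, `P_{range Aᵀ} v` is a fixed point
of `T̃`, hence zero because `I - T̃` is invertible. So the fixed points are the `y` with
`A (y - Δ) = P_{range A} b`, which by Pythagoras is the least squares condition on `y - Δ`. -/

open Matrix

section LeastSquares

variable {E F : Type*} [NormedAddCommGroup E] [InnerProductSpace ℝ E]
  [NormedAddCommGroup F] [InnerProductSpace ℝ F]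

theorem Submodule.norm_sub_sq_eq_of_mem (K : Submodule ℝ F) [K.HasOrthogonalProjection]
    {w : F} (hw : w ∈ K) (b : F) :
    ‖w - b‖ ^ 2 = ‖w - K.starProjection b‖ ^ 2 + ‖b - K.starProjection b‖ ^ 2 := by
  have horth : inner ℝ (w - K.starProjection b) (b - K.starProjection b) = 0 := by
    rw [real_inner_comm]
    exact K.starProjection_inner_eq_zero b _ (K.sub_mem hw (K.starProjection_apply_mem b))
  simpa only [sq, sub_sub_sub_cancel_right] using norm_sub_sq_eq_norm_sq_add_norm_sq_real horth

theorem Submodule.forall_norm_sub_le_iff_eq_starProjection (K : Submodule ℝ F)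
    [K.HasOrthogonalProjection] {u : F} (hu : u ∈ K) (b : F) :
    (∀ w ∈ K, ‖u - b‖ ≤ ‖w - b‖) ↔ u = K.starProjection b := by
  constructor
  · intro hmin
    have hle := hmin _ (K.starProjection_apply_mem b)
    rw [norm_sub_rev (K.starProjection b)] at hle
    have hsq := pow_le_pow_left₀ (norm_nonneg _) hle 2
    rw [K.norm_sub_sq_eq_of_mem hu b] at hsq
    have : ‖u - K.starProjection b‖ = 0 := by
      nlinarith [norm_nonneg (u - K.starProjection b)]
    exact sub_eq_zero.mp (norm_eq_zero.mp this)
  · rintro rfl w hw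
    rw [norm_sub_rev (K.starProjection b),
      ← pow_le_pow_iff_left₀ (norm_nonneg _) (norm_nonneg _) two_ne_zero,
      K.norm_sub_sq_eq_of_mem hw b]
    exact le_add_of_nonneg_left (sq_nonneg _)

theorem LinearMap.forall_norm_apply_sub_le_iff (A : E →ₗ[ℝ] F)
    [(LinearMap.range A).HasOrthogonalProjection] (x : E) (b : F) :
    (∀ z, ‖A x - b‖ ≤ ‖A z - b‖) ↔ A x = (LinearMap.range A).starProjection b := by
  rw [← (LinearMap.range A).forall_norm_sub_le_iff_eq_starProjection (LinearMap.mem_range_self A x)]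
  simp only [LinearMap.mem_range, forall_exists_index, forall_apply_eq_imp_iff]

end LeastSquares

theorem Matrix.ker_toEuclideanLin_transpose {m n : Type*} [Fintype m] [Fintype n]
    [DecidableEq m] [DecidableEq n] (M : Matrix m n ℝ) :
    LinearMap.ker (toEuclideanLin Mᵀ) = (LinearMap.range (toEuclideanLin M))ᗮ := by
  rw [LinearMap.orthogonal_range, ← toEuclideanLin_conjTranspose_eq_adjoint,
    conjTranspose_eq_transpose_of_trivial]

section MatrixMaps

variable {m n p : ℕ}

theorem mulE_add (M N : Matrix (Fin m) (Fin n) ℝ) : mulE (M + N) = mulE M + mulE N := by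
  ext1 x; simp [mulE]

theorem mulE_mul (M : Matrix (Fin m) (Fin n) ℝ) (N : Matrix (Fin n) (Fin p) ℝ) :
    mulE (M * N) = mulE M ∘L mulE N := by
  ext1 x; simp [mulE, toLpLin_apply, mulVec_mulVec]

theorem mulE_one : mulE (1 : Matrix (Fin n) (Fin n) ℝ) = 1 := by
  ext1 x; simp [mulE]

end MatrixMaps

theorem projCLM_eq_starProjection {n : ℕ} (V : Submodule ℝ (EuclideanSpace ℝ (Fin n))) :
    projCLM V = V.starProjection := rfl

section SplittingIteration

variable {𝕜 E F : Type*} [RCLike 𝕜] [NormedAddCommGroup E] [InnerProductSpace 𝕜 E]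
  [NormedAddCommGroup F] [NormedSpace 𝕜 F]
  {T : E →L[𝕜] E} {R : F →L[𝕜] E} {A : E →L[𝕜] F} {V : Submodule 𝕜 E} [V.HasOrthogonalProjection]

theorem apply_eq_zero_of_apply_apply_eq_zero (hTRA : T + R ∘L A = 1)
    (hker : Vᗮ ≤ A.ker) (hinj : Function.Injective ⇑(1 - T ∘L V.starProjection))
    {v : E} (hv : R (A v) = 0) : A v = 0 := by
  have hsplit (x : E) : T x + R (A x) = x := congr($hTRA x)
  set P := V.starProjection
  have hperp : v - P v ∈ Vᗮ := V.sub_starProjection_mem_orthogonal v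
  have hTv : T v = v := by simpa [hv] using hsplit v
  have hAperp : A (v - P v) = 0 := hker hperp
  have hTperp : T (v - P v) = v - P v := by
    simpa only [hAperp, map_zero, add_zero] using hsplit (v - P v)
  have hTPv : T (P v) = P v := by
    rwa [map_sub, hTv, sub_right_inj] at hTperp
  have hPPv : P (P v) = P v := V.starProjection_eq_self_iff.mpr (V.starProjection_apply_mem v)
  have hPv : P v = 0 := hinj <| by
    rw [map_zero]
    show P v - T (P (P v)) = 0
    rw [hPPv, hTPv, sub_self]
  simpa [hPv] using hAperp

theorem mem_of_sub_comp_starProjection_apply_eq (hTRA : T + R ∘L A = 1) (hR : R.range ≤ V)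
    {Δ : E} {c : F} (hΔ : (1 - T ∘L V.starProjection) Δ = R c) : Δ ∈ V := by
  have hTP : T (V.starProjection Δ) = V.starProjection Δ - R (A (V.starProjection Δ)) :=
    eq_sub_of_add_eq congr($hTRA (V.starProjection Δ))
  have hΔ' : Δ = R c + T (V.starProjection Δ) := eq_add_of_sub_eq hΔ
  rw [hΔ', hTP]
  exact V.add_mem (hR ⟨c, rfl⟩) (V.sub_mem (V.starProjection_apply_mem Δ) (hR ⟨_, rfl⟩))

theorem apply_apply_eq_of_sub_comp_starProjection_apply_eq (hTRA : T + R ∘L A = 1)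
    (hR : R.range ≤ V) {Δ : E} {c : F} (hΔ : (1 - T ∘L V.starProjection) Δ = R c) :
    R (A Δ) = R c := by
  have hPΔ : V.starProjection Δ = Δ :=
    V.starProjection_eq_self_iff.mpr (mem_of_sub_comp_starProjection_apply_eq hTRA hR hΔ)
  calc R (A Δ) = Δ - T Δ := eq_sub_of_add_eq' congr($hTRA Δ)
    _ = (1 - T ∘L V.starProjection) Δ := by
      show Δ - T Δ = Δ - T (V.starProjection Δ)
      rw [hPΔ]
    _ = R c := hΔ

theorem setOf_apply_add_eq_self_eq_image_add (hTRA : T + R ∘L A = 1) (hker : Vᗮ ≤ A.ker)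
    (hR : R.range ≤ V) (hinj : Function.Injective ⇑(1 - T ∘L V.starProjection)) {b p : F}
    (hp : p ∈ A.range) {Δ : E} (hΔ : (1 - T ∘L V.starProjection) Δ = R (b - p)) :
    {y | T y + R b = y} = (· + Δ) '' {x | A x = p} := by
  obtain ⟨z, rfl⟩ := hp
  rw [ContinuousLinearMap.coe_coe] at hΔ ⊢
  have hRAΔ := apply_apply_eq_of_sub_comp_starProjection_apply_eq hTRA hR hΔ
  ext y
  have hsplit : T y + R (A y) = y := congr($hTRA y)
  rw [Set.image_add_right, Set.mem_preimage, Set.mem_ofPred_eq, Set.mem_ofPred_eq]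
  have hR_shift : R (A (y + -Δ - z)) = R (A y) - R b := by
    simp only [map_sub, map_add, map_neg, hRAΔ]
    abel
  calc T y + R b = y ↔ R (A (y + -Δ - z)) = 0 := by
        conv_lhs => rhs; rw [← hsplit]
        rw [hR_shift, sub_eq_zero, eq_comm]
        exact add_right_inj _
    _ ↔ A (y + -Δ - z) = 0 :=
        ⟨apply_eq_zero_of_apply_apply_eq_zero hTRA hker hinj, fun h => by rw [h, map_zero]⟩
    _ ↔ A (y + -Δ) = A z := by rw [map_sub, sub_eq_zero]

end SplittingIteration

/-- Under `T + RA = I`, `range R ⊆ range Aᵀ`, `‖T̃‖ < 1` with `T̃ = T P_{range Aᵀ}`, the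
fixed point set of `Q(x) = Tx + Rb` equals `{x + Δ : x ∈ LSS(A;b)}`, where
`Δ = (I − T̃)⁻¹ R P_{null Aᵀ}(b)` and `LSS(A;b)` is the set of least squares solutions. -/
theorem fixQ_eq_LSS_translate (m n : ℕ)
    (A : Matrix (Fin m) (Fin n) ℝ) (b : EuclideanSpace ℝ (Fin m))
    (T : Matrix (Fin n) (Fin n) ℝ)
    (R : Matrix (Fin n) (Fin m) ℝ)
    (h1 : T + R * A = 1)
    (h2 : ∀ y : EuclideanSpace ℝ (Fin m),
      mulE R y ∈ LinearMap.range (Matrix.toEuclideanLin Aᵀ))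
    (Ttil : EuclideanSpace ℝ (Fin n) →L[ℝ] EuclideanSpace ℝ (Fin n))
    (hTtil : Ttil = (mulE T).comp (projCLM (LinearMap.range (Matrix.toEuclideanLin Aᵀ))))
    (h3 : ‖Ttil‖ < 1)
    (LSS : Set (EuclideanSpace ℝ (Fin n)))
    (hLSS : LSS = {x | ∀ z, ‖mulE A x - b‖ ≤ ‖mulE A z - b‖})
    (Δ : EuclideanSpace ℝ (Fin n))
    (hΔ : Δ = Ring.inverse (1 - Ttil)
      (mulE R (projCLM (LinearMap.ker (Matrix.toEuclideanLin Aᵀ)) b))) :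
    {x | mulE T x + mulE R b = x} = (fun x => x + Δ) '' LSS := by
  subst hTtil hLSS
  simp only [projCLM_eq_starProjection] at h3 hΔ
  set V := LinearMap.range (toEuclideanLin Aᵀ)
  set K := (mulE A).range
  have hTRA : mulE T + mulE R ∘L mulE A = 1 := by rw [← mulE_mul, ← mulE_add, h1, mulE_one]
  have hker : Vᗮ ≤ (mulE A).ker := by
    rw [← ker_toEuclideanLin_transpose, transpose_transpose]
    rfl
  have hunit := isUnit_one_sub_of_norm_lt_one h3
  have hΔ' : (1 - mulE T ∘L V.starProjection) Δ = mulE R (b - K.starProjection b) := by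
    rw [hΔ, ← mul_apply_eq_comp, Ring.mul_inverse_cancel _ hunit, one_apply_eq_self,
      ker_toEuclideanLin_transpose, Submodule.starProjection_orthogonal_val]
    rfl
  have hleast :
      {x | ∀ z, ‖mulE A x - b‖ ≤ ‖mulE A z - b‖} = {x | mulE A x = K.starProjection b} :=
    Set.ext fun x => (mulE A).toLinearMap.forall_norm_apply_sub_le_iff x b
  rw [hleast]
  exact setOf_apply_add_eq_self_eq_image_add hTRA hker (by rintro _ ⟨y, rfl⟩; exact h2 y)
    (ContinuousLinearMap.isUnit_iff_bijective.mp hunit).1 (K.starProjection_apply_mem b) hΔ'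
end

section
/- Let C and C̄ be the metric projections onto boxes [a,b] and [ā,b̄] in ℝⁿ respectively, with [ā,b̄] ⊆ [a,b]. Then for any y ∈ [ā,b̄] and any z ∈ ℝⁿ, ‖C̄z − y‖ ≤ ‖Cz − y‖. -/
/-!
Both projections act coordinatewise, so it suffices to compare clamps of a real number.
Since `[ā, b̄] ⊆ [a, b]`, clamping to `[ā, b̄]` is the same as first clamping to `[a, b]`;
and clamping to an interval containing `y` does not increase the distance to `y`.
-/

section Clamp

variable {α : Type*} [LinearOrder α]

lemma ite_clamp_eq_max_min {a b : α} (hab : a ≤ b) (x : α) :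
    (if x < a then a else if b < x then b else x) = max a (min b x) := by
  split_ifs with hxa hbx
  · simp [hxa.le]
  · simp [hbx.le, hab]
  · simp [not_lt.mp hxa, not_lt.mp hbx]

lemma max_min_max_min_of_le {a b a' b' : α} (ha : a ≤ a') (hb : b' ≤ b) (x : α) :
    max a' (min b' (max a (min b x))) = max a' (min b' x) := by
  simp only [max_def, min_def]
  split_ifs <;> order

end Clamp

section ClampDist

variable {α : Type*} [AddCommGroup α] [LinearOrder α] [IsOrderedAddMonoid α]

lemma abs_max_min_sub_le {a b y : α} (hy : a ≤ y ∧ y ≤ b) (x : α) :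
    |max a (min b x) - y| ≤ |x - y| := by
  have hy_fixed : max a (min b y) = y := by simp [hy.1, hy.2]
  calc |max a (min b x) - y| = |max (min b x) a - max (min b y) a| := by
          rw [max_comm (min b y), hy_fixed, max_comm]
    _ ≤ |min b x - min b y| := abs_max_sub_max_le_abs _ _ _
    _ ≤ max |b - b| |x - y| := abs_min_sub_min_le_max _ _ _ _
    _ = |x - y| := by simp

lemma abs_max_min_sub_le_of_subinterval {a b a' b' y : α} (ha : a ≤ a') (hb : b' ≤ b)
    (hy : a' ≤ y ∧ y ≤ b') (x : α) :
    |max a' (min b' x) - y| ≤ |max a (min b x) - y| := by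
  rw [← max_min_max_min_of_le ha hb]
  exact abs_max_min_sub_le hy _

end ClampDist

lemma EuclideanSpace.norm_le_norm_of_forall_abs_le {ι : Type*} [Fintype ι]
    {x y : EuclideanSpace ℝ ι} (h : ∀ i, |x i| ≤ |y i|) : ‖x‖ ≤ ‖y‖ := by
  rw [EuclideanSpace.norm_eq, EuclideanSpace.norm_eq]
  gcongr with i
  simpa only [Real.norm_eq_abs] using h i

theorem nested_box_projection_closer_general (n : ℕ)
    (a b abar bbar : Fin n → ℝ)
    (hincl : ∀ i, a i ≤ abar i ∧ bbar i ≤ b i)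
    (C Cbar : EuclideanSpace ℝ (Fin n) → EuclideanSpace ℝ (Fin n))
    (hC : ∀ x i, C x i =
      if x i < a i then a i else if b i < x i then b i else x i)
    (hCbar : ∀ x i, Cbar x i =
      if x i < abar i then abar i else if bbar i < x i then bbar i else x i)
    (y : EuclideanSpace ℝ (Fin n)) (hy : ∀ i, abar i ≤ y i ∧ y i ≤ bbar i) :
    ∀ z : EuclideanSpace ℝ (Fin n), ‖Cbar z - y‖ ≤ ‖C z - y‖ := by
  intro z
  refine EuclideanSpace.norm_le_norm_of_forall_abs_le fun i => ?_
  have hbar : abar i ≤ bbar i := (hy i).1.trans (hy i).2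
  have hab : a i ≤ b i := (hincl i).1.trans (hbar.trans (hincl i).2)
  simp only [PiLp.sub_apply, hC, hCbar, ite_clamp_eq_max_min hab, ite_clamp_eq_max_min hbar]
  exact abs_max_min_sub_le_of_subinterval (hincl i).1 (hincl i).2 (hy i) _

/-- If `C` and `C̄` are the metric projections onto boxes `[a,b]` and `[ā,b̄]` with
`[ā,b̄] ⊆ [a,b]`, then for any `y ∈ [ā,b̄]` and any `z`, `‖C̄z − y‖ ≤ ‖Cz − y‖`. -/
theorem nested_box_projection_closer (n : ℕ)
    (a b abar bbar : Fin n → ℝ)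
    (hbox : ∀ i, abar i ≤ bbar i)
    (hincl : ∀ i, a i ≤ abar i ∧ bbar i ≤ b i)
    (C Cbar : EuclideanSpace ℝ (Fin n) → EuclideanSpace ℝ (Fin n))
    (hC : ∀ x i, C x i =
      if x i < a i then a i else if b i < x i then b i else x i)
    (hCbar : ∀ x i, Cbar x i =
      if x i < abar i then abar i else if bbar i < x i then bbar i else x i)
    (y : EuclideanSpace ℝ (Fin n)) (hy : ∀ i, abar i ≤ y i ∧ y i ≤ bbar i) :
    ∀ z : EuclideanSpace ℝ (Fin n), ‖Cbar z - y‖ ≤ ‖C z - y‖ :=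
  nested_box_projection_closer_general n a b abar bbar hincl C Cbar hC hCbar y hy
end
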